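/- arXiv:math/0504403 — 3 statements merged into one kernel-verified Lean document; each statement's English description precedes it below -/
import Mathlib

section
/- Let M₁ and M₂ be finitely generated free ℤ-modules of ranks r₁ and r₂, equipped with symmetric bilinear forms B₁ and B₂ respectively. Let B be the orthogonal direct sum form on M₁ × M₂, defined by B((x₁,x₂),(y₁,y₂)) = B₁(x₁,y₁) + B₂(x₂,y₂). If B is isometric (via a ℤ-linear equivalence) to the standard negative definite form on ℤ^{r₁+r₂} given by ⟨x,y⟩ = −∑ᵢ xᵢyᵢ, then B₁ is isometric to the standard negative definite form on ℤ^{r₁} given by ⟨x,y⟩ = −∑ᵢ xᵢyᵢ. -/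
/-!
Let `fᵢ ∈ M₁ × M₂` be the vector sent to the `i`-th unit vector. Since `fᵢ` has norm `-1` and
both summand forms are negative definite, `fᵢ` lies in `M₁` or in `M₂`. Pairing with `fᵢ` reads
off the `i`-th coordinate, so the coordinates of `M₁` vanish at the `fᵢ` lying in `M₂`; hence the
coordinate projection onto the set `s` of the remaining indices is an isometry of `M₁` onto `ℤ^s`.
-/

lemma dotProduct_restrict_of_eq_zero {ι R : Type*} [Fintype ι] [NonUnitalNonAssocSemiring R]
    (s : Finset ι) {u : ι → R} (hu : ∀ i ∉ s, u i = 0) (v : ι → R) :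
    (fun j : s => u j) ⬝ᵥ (fun j : s => v j) = u ⬝ᵥ v := by
  refine (Finset.sum_coe_sort s fun i => u i * v i).trans (Finset.sum_subset s.subset_univ ?_)
  intro i _ hi
  rw [hu i hi, zero_mul]

section OrthogonalSum

variable {M₁ M₂ ι : Type*} [AddCommGroup M₁] [AddCommGroup M₂] [Fintype ι]
  {B₁ : M₁ →ₗ[ℤ] M₁ →ₗ[ℤ] ℤ} {B₂ : M₂ →ₗ[ℤ] M₂ →ₗ[ℤ] ℤ} {e : (M₁ × M₂) ≃ₗ[ℤ] (ι → ℤ)}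

lemma self_add_self_nonpos (he : ∀ p q : M₁ × M₂, B₁ p.1 q.1 + B₂ p.2 q.2 = -(e p ⬝ᵥ e q))
    (p : M₁ × M₂) : B₁ p.1 p.1 + B₂ p.2 p.2 ≤ 0 := by
  rw [he, neg_nonpos]
  exact Finset.sum_nonneg fun i _ => mul_self_nonneg _

lemma eq_zero_of_self_add_self_eq_zero
    (he : ∀ p q : M₁ × M₂, B₁ p.1 q.1 + B₂ p.2 q.2 = -(e p ⬝ᵥ e q))
    {p : M₁ × M₂} (hp : B₁ p.1 p.1 + B₂ p.2 p.2 = 0) : p = 0 := by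
  rw [he, neg_eq_zero, dotProduct_self_eq_zero] at hp
  simpa using congrArg e.symm hp

variable [DecidableEq ι]

lemma apply_eq_neg_pair_symm_single
    (he : ∀ p q : M₁ × M₂, B₁ p.1 q.1 + B₂ p.2 q.2 = -(e p ⬝ᵥ e q)) (p : M₁ × M₂) (i : ι) :
    e p i = -(B₁ p.1 (e.symm (Pi.single i 1)).1 + B₂ p.2 (e.symm (Pi.single i 1)).2) := by
  rw [he, LinearEquiv.apply_symm_apply, dotProduct_single, mul_one, neg_neg]

lemma symm_single_fst_eq_zero_or_snd_eq_zero
    (he : ∀ p q : M₁ × M₂, B₁ p.1 q.1 + B₂ p.2 q.2 = -(e p ⬝ᵥ e q)) (i : ι) :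
    (e.symm (Pi.single i 1)).1 = 0 ∨ (e.symm (Pi.single i 1)).2 = 0 := by
  have hnorm := apply_eq_neg_pair_symm_single he (e.symm (Pi.single i 1)) i
  rw [LinearEquiv.apply_symm_apply, Pi.single_eq_same] at hnorm
  generalize e.symm (Pi.single i 1) = p at hnorm ⊢
  obtain ⟨a, b⟩ := p
  dsimp only at hnorm
  have ha : B₁ a a ≤ 0 := by simpa using self_add_self_nonpos he (a, 0)
  have hb : B₂ b b ≤ 0 := by simpa using self_add_self_nonpos he (0, b)
  rcases (by omega : B₁ a a = 0 ∨ B₂ b b = 0) with h | h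
  · left
    simpa using eq_zero_of_self_add_self_eq_zero he (p := (a, 0)) (by simpa using h)
  · right
    simpa using eq_zero_of_self_add_self_eq_zero he (p := (0, b)) (by simpa using h)

lemma apply_inl_eq_zero_of_symm_single_snd_ne_zero
    (he : ∀ p q : M₁ × M₂, B₁ p.1 q.1 + B₂ p.2 q.2 = -(e p ⬝ᵥ e q)) (x : M₁) {i : ι}
    (hi : (e.symm (Pi.single i 1)).2 ≠ 0) : e (x, 0) i = 0 := by
  have hfi := (symm_single_fst_eq_zero_or_snd_eq_zero he i).resolve_right hi
  simp [apply_eq_neg_pair_symm_single he, hfi]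

theorem exists_isometry_fst_pi_finset
    (he : ∀ p q : M₁ × M₂, B₁ p.1 q.1 + B₂ p.2 q.2 = -(e p ⬝ᵥ e q)) :
    ∃ (s : Finset ι) (φ : M₁ ≃ₗ[ℤ] (s → ℤ)), ∀ x y, B₁ x y = -(φ x ⬝ᵥ φ y) := by
  classical
  let f : ι → M₁ × M₂ := fun i => e.symm (Pi.single i 1)
  let s : Finset ι := {i | (f i).2 = 0}
  have hvanish : ∀ (x : M₁), ∀ i ∉ s, e (x, 0) i = 0 := fun x i hi =>
    apply_inl_eq_zero_of_symm_single_snd_ne_zero he x (by simpa [s] using hi)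
  let φ : M₁ →ₗ[ℤ] (s → ℤ) :=
    LinearMap.funLeft ℤ ℤ Subtype.val ∘ₗ e.toLinearMap ∘ₗ LinearMap.inl ℤ M₁ M₂
  have hφ : ∀ x (j : s), φ x j = e (x, 0) j := fun _ _ => rfl
  have hinj : Function.Injective φ := by
    refine (injective_iff_map_eq_zero φ).mpr fun x hx => ?_
    have : e (x, 0) = 0 := by
      funext i
      by_cases hi : i ∈ s
      · exact (hφ x ⟨i, hi⟩).symm.trans (congrFun hx ⟨i, hi⟩)
      · exact hvanish x i hi
    simpa using congrArg e.symm this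
  have hsurj : Function.Surjective φ := by
    refine LinearMap.range_eq_top.mp (top_le_iff.mp ?_)
    rw [← (Pi.basisFun ℤ s).span_eq, Submodule.span_le]
    rintro _ ⟨j, rfl⟩
    have hj : (f j).2 = 0 := (Finset.mem_filter.mp j.2).2
    refine ⟨(f j).1, funext fun k => ?_⟩
    rw [hφ, ← hj, Prod.mk.eta, LinearEquiv.apply_symm_apply, Pi.basisFun_apply]
    simp only [Pi.single_apply, Subtype.ext_iff]
  refine ⟨s, LinearEquiv.ofBijective φ ⟨hinj, hsurj⟩, fun x y => ?_⟩
  change B₁ x y = -((fun j : s => e (x, 0) j) ⬝ᵥ fun j : s => e (y, 0) j)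
  rw [dotProduct_restrict_of_eq_zero s (hvanish x)]
  simpa using he (x, 0) (y, 0)

end OrthogonalSum

lemma exists_isometry_pi_fin_of_finrank_eq {M κ : Type*} [AddCommGroup M] [Module ℤ M]
    [Fintype κ] {B : M →ₗ[ℤ] M →ₗ[ℤ] ℤ} (φ : M ≃ₗ[ℤ] (κ → ℤ))
    (hφ : ∀ x y, B x y = -(φ x ⬝ᵥ φ y)) {r : ℕ} (hr : Module.finrank ℤ M = r) :
    ∃ ψ : M ≃ₗ[ℤ] (Fin r → ℤ), ∀ x y, B x y = -(ψ x ⬝ᵥ ψ y) := by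
  have hcard : Fintype.card κ = r := by
    rw [← hr, φ.finrank_eq, Module.finrank_fintype_fun_eq_card]
  let σ : κ ≃ Fin r := Fintype.equivFinOfCardEq hcard
  refine ⟨φ.trans (LinearEquiv.funCongrLeft ℤ ℤ σ.symm), fun x y => ?_⟩
  simp only [LinearEquiv.trans_apply, LinearEquiv.funCongrLeft_apply, LinearMap.funLeft,
    LinearMap.coe_mk, AddHom.coe_mk, dotProduct_comp_equiv_symm]
  rw [hφ, Function.comp_assoc, σ.symm_comp_self, Function.comp_id]

theorem direct_summand_of_neg_definite_diagonalizable_general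
    (M₁ M₂ : Type*) [AddCommGroup M₁] [AddCommGroup M₂]
    [Module ℤ M₁] [Module ℤ M₂]
    (r₁ r₂ : ℕ)
    (hr₁ : Module.finrank ℤ M₁ = r₁)
    (B₁ : M₁ →ₗ[ℤ] M₁ →ₗ[ℤ] ℤ) (B₂ : M₂ →ₗ[ℤ] M₂ →ₗ[ℤ] ℤ)
    (h : ∃ e : (M₁ × M₂) ≃ₗ[ℤ] (Fin (r₁ + r₂) → ℤ),
      ∀ p q : M₁ × M₂,
        B₁ p.1 q.1 + B₂ p.2 q.2 = -∑ i, e p i * e q i) :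
    ∃ e₁ : M₁ ≃ₗ[ℤ] (Fin r₁ → ℤ),
      ∀ x y : M₁, B₁ x y = -∑ i, e₁ x i * e₁ y i := by
  -- the statement's `M₁ × M₂` carries `AddCommGroup.toIntModule`, so we use it on the factors too
  obtain rfl := Subsingleton.elim ‹Module ℤ M₁› (AddCommGroup.toIntModule M₁)
  obtain rfl := Subsingleton.elim ‹Module ℤ M₂› (AddCommGroup.toIntModule M₂)
  obtain ⟨e, he⟩ := h
  obtain ⟨s, φ, hφ⟩ := exists_isometry_fst_pi_finset (e := e) he
  exact exists_isometry_pi_fin_of_finrank_eq φ hφ hr₁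

/-- If the orthogonal direct sum of two symmetric bilinear forms on finitely generated
free ℤ-modules is isometric to the standard negative definite form on `ℤ^(r₁+r₂)`,
then the first summand is isometric to the standard negative definite form on `ℤ^r₁`. -/
theorem direct_summand_of_neg_definite_diagonalizable
    (M₁ M₂ : Type*) [AddCommGroup M₁] [AddCommGroup M₂]
    [Module ℤ M₁] [Module ℤ M₂]
    [Module.Free ℤ M₁] [Module.Free ℤ M₂]
    [Module.Finite ℤ M₁] [Module.Finite ℤ M₂]
    (r₁ r₂ : ℕ)
    (hr₁ : Module.finrank ℤ M₁ = r₁) (hr₂ : Module.finrank ℤ M₂ = r₂)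
    (B₁ : M₁ →ₗ[ℤ] M₁ →ₗ[ℤ] ℤ) (B₂ : M₂ →ₗ[ℤ] M₂ →ₗ[ℤ] ℤ)
    (hB₁ : ∀ x y, B₁ x y = B₁ y x) (hB₂ : ∀ x y, B₂ x y = B₂ y x)
    (h : ∃ e : (M₁ × M₂) ≃ₗ[ℤ] (Fin (r₁ + r₂) → ℤ),
      ∀ p q : M₁ × M₂,
        B₁ p.1 q.1 + B₂ p.2 q.2 = -∑ i, e p i * e q i) :
    ∃ e₁ : M₁ ≃ₗ[ℤ] (Fin r₁ → ℤ),
      ∀ x y : M₁, B₁ x y = -∑ i, e₁ x i * e₁ y i :=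
  direct_summand_of_neg_definite_diagonalizable_general M₁ M₂ r₁ r₂ hr₁ B₁ B₂ h
end

section
/- For a nonempty finite set A of positive integers, let D(A) = {1, …, max A} \ A, and extend the complexity to c(A) ∈ WithBot ℕ by setting c(A) = max D(A) when D(A) is nonempty and c(A) = ⊥ when D(A) is empty. Suppose D(A) is nonempty, and let B be either A ∪ {max D(A)}, or A \ {max A} under the additional assumption that A \ {max A} is nonempty. Then the pair (c(B), max B) is strictly smaller than (c(A), max A) in the lexicographic order on (WithBot ℕ) × ℕ. -/
/-- For a nonempty finite set `A` of positive integers,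
`Dset A hA = {1, …, max A} \ A` is the set of missing indices below the maximum. -/
def Dset (A : Finset ℕ) (hA : A.Nonempty) : Finset ℕ :=
  Finset.Icc 1 (A.max' hA) \ A

/-- The complexity `c(A) ∈ WithBot ℕ`: the maximum of `Dset A hA` when it is
nonempty, and `⊥` when it is empty. -/
def cplxW (A : Finset ℕ) (hA : A.Nonempty) : WithBot ℕ :=
  (Dset A hA).max

/-- Both lantern-relation replacements, `A ↦ A ∪ {max D(A)}` and (when nonempty)
`A ↦ A \ {max A}`, strictly decrease the measure `(c(A), max A)` in the
lexicographic order on `(WithBot ℕ) × ℕ`. -/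
theorem measure_lex_strict_decrease
    (A : Finset ℕ) (hA : A.Nonempty) (hpos : ∀ a ∈ A, 0 < a)
    (hDA : (Dset A hA).Nonempty)
    (B : Finset ℕ) (hB : B.Nonempty)
    (hcase : B = A ∪ {(Dset A hA).max' hDA} ∨ B = A \ {A.max' hA}) :
    toLex ((cplxW B hB, B.max' hB) : WithBot ℕ × ℕ) <
      toLex ((cplxW A hA, A.max' hA) : WithBot ℕ × ℕ) := by
  set m := (Dset A hA).max' hDA with hm
  have hmmem : m ∈ Dset A hA := Finset.max'_mem _ hDA
  have hmIcc : m ∈ Finset.Icc 1 (A.max' hA) := (Finset.mem_sdiff.mp hmmem).1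
  have hmA : m ∉ A := (Finset.mem_sdiff.mp hmmem).2
  have hmle : m ≤ A.max' hA := (Finset.mem_Icc.mp hmIcc).2
  have hmlt : m < A.max' hA :=
    lt_of_le_of_ne hmle (fun h => hmA (h ▸ A.max'_mem hA))
  have hcA : cplxW A hA = (m : WithBot ℕ) := (Finset.coe_max' hDA).symm
  rcases hcase with h1 | h2
  · -- B = A ∪ {m}
    have hmaxB : B.max' hB = A.max' hA := by
      apply le_antisymm
      · apply Finset.max'_le
        intro b hb
        rw [h1, Finset.mem_union, Finset.mem_singleton] at hb
        rcases hb with hb | hb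
        · exact Finset.le_max' _ _ hb
        · exact hb ▸ hmle
      · exact Finset.le_max' _ _ (h1 ▸ Finset.mem_union_left _ (A.max'_mem hA))
    apply Prod.Lex.left
    rw [hcA]
    show (Dset B hB).max < (m : WithBot ℕ)
    rcases (Dset B hB).eq_empty_or_nonempty with he | hne
    · rw [he, Finset.max_empty]; exact WithBot.bot_lt_coe m
    rw [← Finset.coe_max' hne]
    have hlt : (Dset B hB).max' hne < m := by
      rw [Finset.max'_lt_iff]
      intro b hb
      rw [Dset, hmaxB, h1, Finset.sdiff_union_distrib, Finset.mem_inter,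
        Finset.mem_sdiff, Finset.mem_sdiff, Finset.mem_singleton] at hb
      have hbD : b ∈ Dset A hA := Finset.mem_sdiff.mpr ⟨hb.1.1, hb.1.2⟩
      have : b ≤ m := Finset.le_max' _ _ hbD
      have hne2 : b ≠ m := hb.2.2
      exact lt_of_le_of_ne this hne2
    exact WithBot.coe_lt_coe.mpr hlt
  · -- B = A \ {max A}
    have hmaxB_lt : B.max' hB < A.max' hA := by
      have hmem : B.max' hB ∈ A \ {A.max' hA} := by
        rw [← h2]; exact B.max'_mem hB
      rw [Finset.mem_sdiff, Finset.mem_singleton] at hmem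
      exact lt_of_le_of_ne (Finset.le_max' _ _ hmem.1) hmem.2
    have hsub : Dset B hB ⊆ Dset A hA := by
      intro b hb
      rw [Dset, Finset.mem_sdiff, Finset.mem_Icc] at hb
      have hble : b ≤ B.max' hB := hb.1.2
      refine Finset.mem_sdiff.mpr ⟨Finset.mem_Icc.mpr ⟨hb.1.1, le_of_lt (lt_of_le_of_lt hble hmaxB_lt)⟩, ?_⟩
      intro hbA
      apply hb.2
      rw [h2, Finset.mem_sdiff, Finset.mem_singleton]
      exact ⟨hbA, fun h => absurd (h ▸ lt_of_le_of_lt hble hmaxB_lt) (lt_irrefl _)⟩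
    have hle : cplxW B hB ≤ cplxW A hA := Finset.max_mono hsub
    rcases lt_or_eq_of_le hle with hlt | heq
    · exact Prod.Lex.left _ _ hlt
    · rw [heq]; exact Prod.Lex.right _ hmaxB_lt
end

section
/- For a nonempty finite set A of positive integers, let D(A) = {1, …, max A} \ A. Define a relation R on nonempty finite sets of positive integers by: R B A holds if and only if D(A) is nonempty and either B = A ∪ {max D(A)}, or B = A \ {max A} with B nonempty. Then the relation R is well-founded; that is, there is no infinite sequence A₀, A₁, A₂, … of nonempty finite sets of positive integers with R A_{n+1} A_n for all n. -/
/-- Nonempty finite sets of positive integers. -/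
def PosFinset : Type :=
  {A : Finset ℕ // A.Nonempty ∧ ∀ a ∈ A, 0 < a}

/-- The lantern-relation reduction: `R B A` holds iff `D(A)` is nonempty and
either `B = A ∪ {max D(A)}`, or `B = A \ {max A}` (with `B` nonempty, which is
automatic for elements of `PosFinset`). -/
def lanternRel (B A : PosFinset) : Prop :=
  ∃ hD : (Dset A.1 A.2.1).Nonempty,
    B.1 = A.1 ∪ {(Dset A.1 A.2.1).max' hD} ∨ B.1 = A.1 \ {A.1.max' A.2.1}

/-- The measure: (max A)² + |D(A)|. -/
def lanternMeasure (A : PosFinset) : ℕ :=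
  (A.1.max' A.2.1) ^ 2 + (Dset A.1 A.2.1).card

lemma lanternRel_measure_lt (B A : PosFinset) (h : lanternRel B A) :
    lanternMeasure B < lanternMeasure A := by
  obtain ⟨hD, h | h⟩ := h
  · -- fill a gap: max unchanged, |D| decreases
    set m := A.1.max' A.2.1 with hm
    set d := (Dset A.1 A.2.1).max' hD with hd
    have hdmem : d ∈ Dset A.1 A.2.1 := Finset.max'_mem _ _
    have hdIcc : d ∈ Finset.Icc 1 m := (Finset.mem_sdiff.mp hdmem).1
    have hdA : d ∉ A.1 := (Finset.mem_sdiff.mp hdmem).2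
    have hdm : d ≤ m := (Finset.mem_Icc.mp hdIcc).2
    have hmB : m ∈ B.1 := by
      rw [h]; exact Finset.mem_union_left _ (A.1.max'_mem A.2.1)
    have hmaxB : B.1.max' B.2.1 = m := by
      apply le_antisymm
      · apply Finset.max'_le
        intro b hb
        rw [h, Finset.mem_union, Finset.mem_singleton] at hb
        rcases hb with hb | hb
        · exact Finset.le_max' _ _ hb
        · exact hb ▸ hdm
      · exact Finset.le_max' _ _ hmB
    have hDB : Dset B.1 B.2.1 = (Dset A.1 A.2.1).erase d := by
      unfold Dset
      rw [hmaxB, h]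
      ext x
      simp only [Finset.mem_sdiff, Finset.mem_union, Finset.mem_singleton,
        Finset.mem_erase]
      tauto
    have hcard : (Dset B.1 B.2.1).card < (Dset A.1 A.2.1).card := by
      rw [hDB, Finset.card_erase_of_mem hdmem]
      exact Nat.sub_lt (Finset.card_pos.mpr hD) one_pos
    unfold lanternMeasure
    rw [hmaxB, ← hm]
    omega
  · -- remove the max: max decreases
    set m := A.1.max' A.2.1 with hm
    have hmpos : 1 ≤ m := A.2.2 m (A.1.max'_mem A.2.1)
    set m' := B.1.max' B.2.1 with hm'
    have hm'B : m' ∈ B.1 := B.1.max'_mem B.2.1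
    have hm'lt : m' < m := by
      rw [h, Finset.mem_sdiff, Finset.mem_singleton] at hm'B
      exact lt_of_le_of_ne (Finset.le_max' _ _ hm'B.1) hm'B.2
    have hDcard : (Dset B.1 B.2.1).card ≤ m' := by
      calc (Dset B.1 B.2.1).card ≤ (Finset.Icc 1 m').card :=
            Finset.card_le_card (Finset.sdiff_subset)
        _ = m' := by rw [Nat.card_Icc]; omega
    unfold lanternMeasure
    rw [← hm, ← hm']
    have h1 : m' ^ 2 + (Dset B.1 B.2.1).card ≤ m' ^ 2 + m' := by omega
    have h2 : m' ^ 2 + m' < m ^ 2 := by nlinarith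
    omega

/-- The lantern-relation reduction is well-founded: there is no infinite sequence
`A₀, A₁, A₂, …` of nonempty finite sets of positive integers with
`lanternRel A_{n+1} A_n` for all `n`. -/
theorem lanternRel_wellFounded : WellFounded lanternRel := by
  exact Subrelation.wf (fun {B A} h => lanternRel_measure_lt B A h)
    (InvImage.wf lanternMeasure Nat.lt_wfRel.wf)
end
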